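/- Let P_n be the path graph on n ≥ 3 vertices. Then BRL1(P_n) = [2(n−1)^2 + 2(n−2)^2 + 2(n−1)(n−2) + 12(n−1)^2(n−3)] / [(n−1)^2 (n−2)^2] and BRL2(P_n) = [2(n−1)^2 + 2(n−2)^2 − 2(n−1)(n−2) + 4(n−1)^2(n−3)] / [(n−1)^2 (n−2)^2]. -/

import Mathlib

/-!
In `Pₙ` each of the two end edges joins a vertex of degree 1 to one of degree 2, so its Banhatti
degrees are `1/(n-1)` (at the leaf) and `1/(n-2)`; each of the other `n - 3` edges joins two
vertices of degree 2 and has Banhatti degree `2/(n-2)` at both ends. Hence for a symmetric `φ` the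
edge sum of `φ(B(u), B(v))` is `2 φ(1/(n-1), 1/(n-2)) + (n-3) φ(2/(n-2), 2/(n-2))`, and both
indices follow by clearing denominators.
-/

open Finset SimpleGraph

variable {V : Type*}

/-- The degree of a vertex, as a real number. -/
noncomputable def deg [Fintype V] (G : SimpleGraph V) (v : V) : ℝ :=
  haveI := Classical.decEq V
  haveI : DecidableRel G.Adj := Classical.decRel _
  (G.degree v : ℝ)

/-- Sum of a symmetric function of the two endpoints, over the edges of `G`
(each edge counted once). -/
noncomputable def edgeSum [Fintype V] (G : SimpleGraph V)
    (f : V → V → ℝ) (hf : ∀ u v, f u v = f v u) : ℝ :=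
  haveI := Classical.decEq V
  haveI : DecidableRel G.Adj := Classical.decRel _
  ∑ e ∈ G.edgeFinset, Sym2.lift ⟨f, hf⟩ e

/-- The Banhatti degree of the endpoint `u` of an edge `uv`:
`B(u) = (d(u) + d(v) − 2)/(n − d(u))` where `n` is the number of vertices. -/
noncomputable def bdeg [Fintype V] (G : SimpleGraph V) (u v : V) : ℝ :=
  (deg G u + deg G v - 2) / ((Fintype.card V : ℝ) - deg G u)

/-- The first Banhatti Rehan–Lanel index:
`BRL₁(G) = Σ_{uv∈E(G)} (B(u)² + B(v)² + B(u)B(v))`. -/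
noncomputable def BRL1 [Fintype V] (G : SimpleGraph V) : ℝ :=
  edgeSum G (fun u v => bdeg G u v ^ 2 + bdeg G v u ^ 2 + bdeg G u v * bdeg G v u)
    (fun u v => by ring)

/-- The second Banhatti Rehan–Lanel index:
`BRL₂(G) = Σ_{uv∈E(G)} (B(u)² + B(v)² − B(u)B(v))`. -/
noncomputable def BRL2 [Fintype V] (G : SimpleGraph V) : ℝ :=
  edgeSum G (fun u v => bdeg G u v ^ 2 + bdeg G v u ^ 2 - bdeg G u v * bdeg G v u)
    (fun u v => by ring)

lemma pathGraph_degree {n : ℕ} (hn : 2 ≤ n) (v : Fin n) [DecidableRel (pathGraph n).Adj] :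
    (pathGraph n).degree v = if v.val = 0 ∨ v.val + 1 = n then 1 else 2 := by
  have hv := v.isLt
  rw [← card_neighborFinset_eq_degree, neighborFinset_eq_filter]
  by_cases h0 : v.val = 0
  · have : univ.filter ((pathGraph n).Adj v) = {⟨1, by omega⟩} := by
      ext w
      simp only [mem_filter, mem_univ, true_and, mem_singleton, pathGraph_adj, Fin.ext_iff]
      omega
    simp [this, h0]
  by_cases h1 : v.val + 1 = n
  · have : univ.filter ((pathGraph n).Adj v) = {⟨n - 2, by omega⟩} := by
      ext w
      have := w.isLt
      simp only [mem_filter, mem_univ, true_and, mem_singleton, pathGraph_adj, Fin.ext_iff]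
      omega
    simp [this, h1]
  · have : univ.filter ((pathGraph n).Adj v) = {⟨v.val - 1, by omega⟩, ⟨v.val + 1, by omega⟩} := by
      ext w
      simp only [mem_filter, mem_univ, true_and, mem_insert, mem_singleton, pathGraph_adj,
        Fin.ext_iff]
      omega
    rw [this, card_pair (by simp [Fin.ext_iff])]
    simp [h0, h1]

lemma deg_pathGraph {n : ℕ} (hn : 2 ≤ n) (v : Fin n) :
    deg (pathGraph n) v = if v.val = 0 ∨ v.val + 1 = n then 1 else 2 := by
  rw [deg, pathGraph_degree hn]
  split_ifs <;> norm_num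

def pathEdge {m : ℕ} (i : Fin m) : Sym2 (Fin (m + 1)) := s(i.castSucc, i.succ)

lemma pathEdge_injective (m : ℕ) : Function.Injective (pathEdge (m := m)) := by
  intro i j h
  rcases Sym2.eq_iff.mp h with ⟨h, -⟩ | ⟨h₁, h₂⟩
  · exact Fin.castSucc_inj.mp h
  · rw [Fin.ext_iff] at h₁ h₂
    simp only [Fin.val_castSucc, Fin.val_succ] at h₁ h₂
    omega

lemma pathGraph_edgeFinset (m : ℕ) [Fintype (pathGraph (m + 1)).edgeSet] :
    (pathGraph (m + 1)).edgeFinset = univ.map ⟨pathEdge, pathEdge_injective m⟩ := by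
  ext e
  induction e using Sym2.ind with
  | _ u v =>
    simp only [mem_edgeFinset, mem_edgeSet, pathGraph_adj, mem_map, mem_univ, true_and,
      Function.Embedding.coeFn_mk, pathEdge, Sym2.eq_iff, Fin.ext_iff, Fin.val_castSucc,
      Fin.val_succ]
    constructor
    · rintro (h | h)
      · exact ⟨⟨u, by omega⟩, Or.inl ⟨rfl, h⟩⟩
      · exact ⟨⟨v, by omega⟩, Or.inr ⟨rfl, h⟩⟩
    · rintro ⟨i, ⟨h₁, h₂⟩ | ⟨h₁, h₂⟩⟩ <;> omega

lemma edgeSum_pathGraph (m : ℕ) (f : Fin (m + 1) → Fin (m + 1) → ℝ) (hf : ∀ u v, f u v = f v u) :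
    edgeSum (pathGraph (m + 1)) f hf = ∑ i : Fin m, f i.castSucc i.succ := by
  classical
  rw [edgeSum, pathGraph_edgeFinset, sum_map]
  rfl

lemma edgeSum_pathGraph_bdeg {n : ℕ} (hn : 3 ≤ n) (g : ℝ → ℝ → ℝ) (hg : ∀ x y, g x y = g y x) :
    edgeSum (pathGraph n) (fun u v => g (bdeg (pathGraph n) u v) (bdeg (pathGraph n) v u))
        (fun _ _ => hg _ _) =
      2 * g (1 / (n - 1)) (1 / (n - 2)) + (n - 3) * g (2 / (n - 2)) (2 / (n - 2)) := by
  obtain ⟨k, rfl⟩ : ∃ k, n = k + 3 := ⟨n - 3, by omega⟩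
  rw [edgeSum_pathGraph, Fin.sum_univ_succ, Fin.sum_univ_castSucc]
  have hmid (j : Fin k) : (j : ℕ) ≠ k ∧ (j : ℕ) ≠ k + 1 := ⟨j.isLt.ne, by omega⟩
  simp [bdeg, deg_pathGraph, hmid, hg (_ - 2)⁻¹, two_mul, add_comm, add_left_comm]

/-- For the path graph `Pₙ` on `n ≥ 3` vertices:
`BRL₁(Pₙ) = [2(n−1)² + 2(n−2)² + 2(n−1)(n−2) + 12(n−1)²(n−3)] / [(n−1)²(n−2)²]` and
`BRL₂(Pₙ) = [2(n−1)² + 2(n−2)² − 2(n−1)(n−2) + 4(n−1)²(n−3)] / [(n−1)²(n−2)²]`. -/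
theorem BRL_pathGraph (n : ℕ) (hn : 3 ≤ n) :
    BRL1 (SimpleGraph.pathGraph n) =
        (2 * ((n : ℝ) - 1) ^ 2 + 2 * ((n : ℝ) - 2) ^ 2 +
            2 * ((n : ℝ) - 1) * ((n : ℝ) - 2) + 12 * ((n : ℝ) - 1) ^ 2 * ((n : ℝ) - 3)) /
          (((n : ℝ) - 1) ^ 2 * ((n : ℝ) - 2) ^ 2) ∧
      BRL2 (SimpleGraph.pathGraph n) =
        (2 * ((n : ℝ) - 1) ^ 2 + 2 * ((n : ℝ) - 2) ^ 2 -
            2 * ((n : ℝ) - 1) * ((n : ℝ) - 2) + 4 * ((n : ℝ) - 1) ^ 2 * ((n : ℝ) - 3)) /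
          (((n : ℝ) - 1) ^ 2 * ((n : ℝ) - 2) ^ 2) := by
  have hn' : (3 : ℝ) ≤ n := by exact_mod_cast hn
  have h₁ : (n : ℝ) - 1 ≠ 0 := by linarith
  have h₂ : (n : ℝ) - 2 ≠ 0 := by linarith
  constructor
  · rw [BRL1, edgeSum_pathGraph_bdeg hn (fun x y => x ^ 2 + y ^ 2 + x * y) (fun x y => by ring)]
    field_simp
    ring
  · rw [BRL2, edgeSum_pathGraph_bdeg hn (fun x y => x ^ 2 + y ^ 2 - x * y) (fun x y => by ring)]
    field_simp
    ring
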